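/- arXiv:1310.3526 — 2 statements merged into one kernel-verified Lean document; each statement's English description precedes it below -/
import Mathlib

section
/- Let ε' ∈ (0,1) and suppose p(n) = C·n^{-2/3} for some constant C > 0. Then asymptotically almost surely every subgraph G' of the random bipartite graph G(n,n,p(n)) with minimum degree at least ε'·n·p(n) satisfies the following expansion property: for every vertex set X ⊆ V₀ ∪ V₁ with |X| ≤ ε'·n/15, one has |N_{G'}(X) \ X| ≥ 2|X|. -/
open MeasureTheory

/-- The Bernoulli measure on `Bool` with success probability `p`. -/
noncomputable def bernoulliMeasure (p : ℝ) : Measure Bool :=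
  (PMF.bernoulli (min (Real.toNNReal p) 1) (min_le_right _ _)).toMeasure

/-- The distribution of `G(n, n, p)`: each of the `n²` potential edges (indexed by
`Fin n × Fin n`) is present independently with probability `p`. -/
noncomputable def bipartiteMeasure (n : ℕ) (p : ℝ) : Measure (Fin n × Fin n → Bool) :=
  Measure.pi fun _ => bernoulliMeasure p

/-- The bipartite graph on `Fin n ⊕ Fin n` determined by the edge indicators `ω`. -/
def bipartiteGraph (n : ℕ) (ω : Fin n × Fin n → Bool) : SimpleGraph (Fin n ⊕ Fin n) where
  Adj x y := match x, y with
    | Sum.inl i, Sum.inr j => ω (i, j) = true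
    | Sum.inr j, Sum.inl i => ω (i, j) = true
    | _, _ => False
  symm := ⟨by rintro (i|i) (j|j) h <;> simp_all⟩
  loopless := ⟨by rintro (i|i) h <;> simp_all⟩


/-- `N_G(X)`: the set of vertices adjacent in `G` to at least one vertex of `X`. -/
def setNeighborSet {V : Type*} (G : SimpleGraph V) (X : Set V) : Set V :=
  {u | ∃ v ∈ X, G.Adj v u}

/-!
Call `ω` sparse if every nonempty vertex set `S` with `|S| ≤ ε' n / 5` spans fewer than
`|S| d / 6` edges, where `d = ε' n p`. Sparseness forces the expansion: if `|N(X) \ X| < 2 |X|`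
for some `X` with `|X| ≤ ε' n / 15`, then `S = X ∪ N(X)` has `|S| < 3 |X|`, while the minimum
degree condition gives `S` at least `|X| d / 2 > |S| d / 6` edges.

A fixed `S` offers at most `|S|² / 4` potential edges, so a union bound over sets of
`t = ⌈|S| d / 6⌉` of them shows that `S` is dense with probability at most
`C(|S|²/4, t) pᵗ ≤ (3 |S|² p / 4t)ᵗ ≤ (9/10)ᵗ ≤ exp (-|S| d / 60)`. Summing over all
`S`, the graph fails to be sparse with probability at most
`(1 + e^{-d/60})^{2n} - 1 ≤ exp (2n e^{-d/60}) - 1`, which tends to `0` since `d = ε' C n^{1/3}`.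
-/

open Finset Filter Topology Real

namespace SimpleGraph

variable {V : Type*}

/-- Twice the number of edges of `G[S]`. -/
def innerDegreeSum (G : SimpleGraph V) [DecidableRel G.Adj] (S : Finset V) : ℕ :=
  ∑ v ∈ S, #{u ∈ S | G.Adj v u}

def IsSparseUpTo (G : SimpleGraph V) [DecidableRel G.Adj] (s d : ℝ) : Prop :=
  ∀ S : Finset V, S.Nonempty → (#S : ℝ) ≤ s → (G.innerDegreeSum S : ℝ) < #S * d / 3

theorem two_mul_ncard_le_ncard_setNeighborSet_diff [Finite V] {G G' : SimpleGraph V}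
    [DecidableRel G.Adj] {s d : ℝ} (hG : G.IsSparseUpTo s d) (hle : G' ≤ G)
    (hdeg : ∀ v, d ≤ (G'.neighborSet v).ncard) {X : Set V} (hX : 3 * (X.ncard : ℝ) ≤ s) :
    2 * X.ncard ≤ (setNeighborSet G' X \ X).ncard := by
  classical
  have := Fintype.ofFinite V
  by_contra! hlt
  set S := (X ∪ setNeighborSet G' X).toFinset
  have hXS : X.toFinset ⊆ S := Set.toFinset_subset_toFinset.2 Set.subset_union_left
  have hS : #S + 1 ≤ 3 * X.ncard := by
    have hunion := Set.ncard_union_le X (setNeighborSet G' X \ X)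
    rw [Set.union_sdiff_self] at hunion
    have hSX : #S = (X ∪ setNeighborSet G' X).ncard := (Set.ncard_eq_toFinset_card' _).symm
    omega
  have hSne : S.Nonempty := by
    refine Nonempty.mono hXS ?_
    rw [Set.toFinset_nonempty, ← Set.ncard_pos]
    omega
  have hdegS : ∀ v ∈ X, (G'.neighborSet v).ncard = #{u ∈ S | G'.Adj v u} := by
    intro v hv
    rw [← Set.ncard_coe_finset]
    congr 1
    ext u
    simp only [coe_filter, Set.mem_toFinset, Set.mem_union, S]
    exact ⟨fun h => ⟨Or.inr ⟨v, hv, h⟩, h⟩, And.right⟩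
  have hsum : (X.ncard : ℝ) * d ≤ (G.innerDegreeSum S : ℝ) := by
    calc (X.ncard : ℝ) * d = ∑ _v ∈ X.toFinset, d := by
          rw [sum_const, nsmul_eq_mul, Set.ncard_eq_toFinset_card']
      _ ≤ ∑ v ∈ X.toFinset, (#{u ∈ S | G'.Adj v u} : ℝ) :=
          sum_le_sum fun v hv => hdegS v (Set.mem_toFinset.1 hv) ▸ hdeg v
      _ ≤ ∑ v ∈ X.toFinset, (#{u ∈ S | G.Adj v u} : ℝ) := by
          gcongr with v
          exact fun h => hle h
      _ ≤ (G.innerDegreeSum S : ℝ) := by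
          push_cast [innerDegreeSum]
          exact sum_le_sum_of_subset_of_nonneg hXS fun _ _ _ => by positivity
  have hS' : (#S : ℝ) + 1 ≤ 3 * X.ncard := by exact_mod_cast hS
  have hsparse := hG S hSne (by linarith)
  have hd : 0 < d := by
    have h0 : (0 : ℝ) < #S * d / 3 := (Nat.cast_nonneg _).trans_lt hsparse
    exact pos_of_mul_pos_right (by linarith : (0 : ℝ) < #S * d) (Nat.cast_nonneg _)
  nlinarith [mul_le_mul_of_nonneg_right hS' hd.le]

end SimpleGraph

namespace Finset

theorem four_mul_card_toLeft_mul_card_toRight_le {α β : Type*} (S : Finset (α ⊕ β)) :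
    4 * (#S.toLeft * #S.toRight) ≤ #S ^ 2 := by
  rw [← card_toLeft_add_card_toRight (u := S)]
  nlinarith [sq_nonneg ((#S.toLeft : ℤ) - #S.toRight)]

theorem sum_pow_card_le_exp_sub_one {α : Type*} [Fintype α] {x : ℝ} (hx : 0 ≤ x)
    {A : Finset (Finset α)} (hA : ∅ ∉ A) :
    ∑ S ∈ A, x ^ #S ≤ exp (Fintype.card α * x) - 1 := by
  classical
  have hsum : ∑ S ∈ insert ∅ A, x ^ #S ≤ (x + 1) ^ Fintype.card α := by
    rw [← card_univ, ← sum_pow_mul_eq_add_pow x 1 univ]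
    simp only [one_pow, mul_one]
    exact sum_le_sum_of_subset_of_nonneg (fun S _ => mem_powerset.2 (subset_univ S))
      fun _ _ _ => by positivity
  have hexp : (x + 1) ^ Fintype.card α ≤ exp (Fintype.card α * x) := by
    rw [exp_nat_mul]
    exact pow_le_pow_left₀ (by positivity) (add_one_le_exp x) _
  rw [sum_insert hA, card_empty, pow_zero] at hsum
  linarith

end Finset

namespace Nat

theorem cast_choose_mul_pow_le (m t : ℕ) {p : ℝ} (hp : 0 ≤ p) :
    (m.choose t : ℝ) * p ^ t ≤ (3 * m * p / t) ^ t := by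
  rcases t.eq_zero_or_pos with rfl | ht
  · simp
  have hfact : (t : ℝ) ^ t ≤ 3 ^ t * t.factorial := by
    have h := pow_div_factorial_le_exp (t : ℝ) t.cast_nonneg t
    rw [div_le_iff₀ (by positivity), ← exp_one_pow] at h
    refine h.trans (by gcongr; linarith [exp_one_lt_d9])
  have hchoose : (m.choose t : ℝ) * t.factorial ≤ (m : ℝ) ^ t :=
    (le_div_iff₀ (by positivity)).1 (choose_le_pow_div t m)
  rw [div_pow, le_div_iff₀ (by positivity)]
  calc (m.choose t : ℝ) * p ^ t * t ^ t
      ≤ (m.choose t : ℝ) * p ^ t * (3 ^ t * t.factorial) := by gcongr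
    _ = (m.choose t * t.factorial : ℝ) * (3 * p) ^ t := by ring
    _ ≤ (m : ℝ) ^ t * (3 * p) ^ t := by gcongr
    _ = (3 * m * p) ^ t := by ring

theorem cast_choose_mul_pow_le_exp {m t : ℕ} {p : ℝ} (hp : 0 ≤ p)
    (h : 10 * m * p ≤ 3 * t) : (m.choose t : ℝ) * p ^ t ≤ exp (-(t / 10)) := by
  have hratio : 3 * m * p / t ≤ 1 - 1 / 10 := by
    rcases t.eq_zero_or_pos with rfl | ht
    · norm_num
    rw [div_le_iff₀ (by positivity)]
    linarith
  calc (m.choose t : ℝ) * p ^ t ≤ (3 * m * p / t) ^ t := cast_choose_mul_pow_le m t hp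
    _ ≤ (1 - 1 / 10) ^ t := by gcongr
    _ ≤ exp (-(1 / 10)) ^ t := by gcongr; exact one_sub_le_exp_neg _
    _ = exp (-(t / 10)) := by rw [← exp_nat_mul]; ring_nf

end Nat

instance (n : ℕ) (ω : Fin n × Fin n → Bool) : DecidableRel (bipartiteGraph n ω).Adj
  | .inl i, .inr j => inferInstanceAs (Decidable (ω (i, j) = true))
  | .inr j, .inl i => inferInstanceAs (Decidable (ω (i, j) = true))
  | .inl _, .inl _ => isFalse id
  | .inr _, .inr _ => isFalse id

section BipartiteGraph

variable {n : ℕ} {ω : Fin n × Fin n → Bool} {i j : Fin n}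

@[simp] theorem bipartiteGraph_adj_inl_inr :
    (bipartiteGraph n ω).Adj (.inl i) (.inr j) ↔ ω (i, j) = true := Iff.rfl

@[simp] theorem bipartiteGraph_adj_inr_inl :
    (bipartiteGraph n ω).Adj (.inr j) (.inl i) ↔ ω (i, j) = true := Iff.rfl

@[simp] theorem bipartiteGraph_not_adj_inl_inl :
    ¬(bipartiteGraph n ω).Adj (.inl i) (.inl j) := id

@[simp] theorem bipartiteGraph_not_adj_inr_inr :
    ¬(bipartiteGraph n ω).Adj (.inr i) (.inr j) := id

theorem innerDegreeSum_bipartiteGraph (S : Finset (Fin n ⊕ Fin n)) :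
    (bipartiteGraph n ω).innerDegreeSum S =
      2 * #{e ∈ S.toLeft ×ˢ S.toRight | ω e = true} := by
  simp only [SimpleGraph.innerDegreeSum, card_filter, sum_sum_eq_sum_toLeft_add_sum_toRight,
    sum_product, bipartiteGraph_adj_inl_inr, bipartiteGraph_adj_inr_inl,
    bipartiteGraph_not_adj_inl_inl, bipartiteGraph_not_adj_inr_inr, if_false, sum_const_zero,
    zero_add, add_zero]
  rw [sum_comm (s := S.toRight)]
  ring

end BipartiteGraph

instance (p : ℝ) : IsProbabilityMeasure (bernoulliMeasure p) :=
  PMF.toMeasure.isProbabilityMeasure _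

instance (n : ℕ) (p : ℝ) : IsProbabilityMeasure (bipartiteMeasure n p) := by
  unfold bipartiteMeasure; infer_instance

theorem bernoulliMeasure_singleton_true {p : ℝ} (hp1 : p ≤ 1) :
    bernoulliMeasure p {true} = ENNReal.ofReal p := by
  rw [bernoulliMeasure, PMF.toMeasure_apply_singleton _ _ (measurableSet_singleton _),
    PMF.bernoulli_apply]
  simp [min_eq_left (Real.toNNReal_le_one.2 hp1), ENNReal.ofReal]

section BipartiteMeasure

variable {n : ℕ} {p : ℝ}

theorem bipartiteMeasure_forall_mem_eq_true (hp1 : p ≤ 1) (F : Finset (Fin n × Fin n)) :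
    bipartiteMeasure n p {ω | ∀ e ∈ F, ω e = true} = ENNReal.ofReal p ^ #F := by
  classical
  have hpi : {ω : Fin n × Fin n → Bool | ∀ e ∈ F, ω e = true} =
      Set.univ.pi fun e => if e ∈ F then {true} else Set.univ := by
    ext ω
    simp only [Set.mem_ofPred_eq, Set.mem_pi, Set.mem_univ, true_implies]
    refine forall_congr' fun e => ?_
    split_ifs <;> simp [*]
  simp only [hpi, bipartiteMeasure, Measure.pi_pi, apply_ite (bernoulliMeasure p),
    bernoulliMeasure_singleton_true hp1, measure_univ, prod_ite_mem, univ_inter, prod_const]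

theorem bipartiteMeasure_le_card_filter_le (hp1 : p ≤ 1) (T : Finset (Fin n × Fin n))
    (t : ℕ) :
    bipartiteMeasure n p {ω | t ≤ #{e ∈ T | ω e = true}}
      ≤ (#T).choose t * ENNReal.ofReal p ^ t := by
  calc bipartiteMeasure n p {ω | t ≤ #{e ∈ T | ω e = true}}
      ≤ bipartiteMeasure n p (⋃ F ∈ T.powersetCard t, {ω | ∀ e ∈ F, ω e = true}) := by
        refine measure_mono fun ω hω => ?_
        obtain ⟨F, hF, hFcard⟩ := exists_subset_card_eq hω
        simp only [Set.mem_iUnion, mem_powersetCard]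
        exact ⟨F, ⟨hF.trans (filter_subset _ _), hFcard⟩,
          fun e he => (mem_filter.1 (hF he)).2⟩
    _ ≤ ∑ F ∈ T.powersetCard t, bipartiteMeasure n p {ω | ∀ e ∈ F, ω e = true} :=
        measure_biUnion_finset_le _ _
    _ = (#T).choose t * ENNReal.ofReal p ^ t := by
        rw [sum_congr rfl fun F hF => by
            rw [bipartiteMeasure_forall_mem_eq_true hp1, (mem_powersetCard.1 hF).2],
          sum_const, card_powersetCard, nsmul_eq_mul]

theorem bipartiteMeasure_innerDegreeSum_ge_le {d : ℝ} (hp0 : 0 ≤ p) (hp1 : p ≤ 1)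
    (S : Finset (Fin n ⊕ Fin n)) (hS : 5 * #S * p ≤ d) :
    bipartiteMeasure n p
        {ω | #S * d / 3 ≤ ((bipartiteGraph n ω).innerDegreeSum S : ℝ)}
      ≤ ENNReal.ofReal (exp (-(d / 60)) ^ #S) := by
  set t := ⌈#S * d / 6⌉₊
  have ht : (#S : ℝ) * d / 6 ≤ t := Nat.le_ceil _
  have hslots : 10 * (#(S.toLeft ×ˢ S.toRight) : ℝ) * p ≤ 3 * t := by
    have h4 : 4 * (#(S.toLeft ×ˢ S.toRight) : ℝ) ≤ #S ^ 2 := by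
      rw [card_product]
      exact_mod_cast four_mul_card_toLeft_mul_card_toRight_le S
    nlinarith [mul_le_mul_of_nonneg_right h4 hp0, mul_le_mul_of_nonneg_left hS (#S).cast_nonneg]
  calc bipartiteMeasure n p
        {ω | #S * d / 3 ≤ ((bipartiteGraph n ω).innerDegreeSum S : ℝ)}
      ≤ bipartiteMeasure n p {ω | t ≤ #{e ∈ S.toLeft ×ˢ S.toRight | ω e = true}} := by
        refine measure_mono fun ω hω => Nat.ceil_le.2 ?_
        simp only [Set.mem_ofPred_eq, innerDegreeSum_bipartiteGraph] at hω
        push_cast at hω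
        linarith
    _ ≤ (#(S.toLeft ×ˢ S.toRight)).choose t * ENNReal.ofReal p ^ t :=
        bipartiteMeasure_le_card_filter_le hp1 _ t
    _ = ENNReal.ofReal ((#(S.toLeft ×ˢ S.toRight)).choose t * p ^ t) := by
        rw [ENNReal.ofReal_mul (by positivity), ENNReal.ofReal_pow hp0, ENNReal.ofReal_natCast]
    _ ≤ ENNReal.ofReal (exp (-(t / 10))) :=
        ENNReal.ofReal_le_ofReal (Nat.cast_choose_mul_pow_le_exp hp0 hslots)
    _ ≤ ENNReal.ofReal (exp (-(d / 60)) ^ #S) := by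
        rw [← exp_nat_mul]
        gcongr
        linarith

theorem bipartiteMeasure_not_isSparseUpTo_le {s d : ℝ} (hp0 : 0 ≤ p) (hp1 : p ≤ 1)
    (hsd : 5 * s * p ≤ d) :
    bipartiteMeasure n p {ω | ¬(bipartiteGraph n ω).IsSparseUpTo s d}
      ≤ ENNReal.ofReal (exp (2 * n * exp (-(d / 60))) - 1) := by
  classical
  set A : Finset (Finset (Fin n ⊕ Fin n)) := {S | S.Nonempty ∧ (#S : ℝ) ≤ s}
  calc bipartiteMeasure n p {ω | ¬(bipartiteGraph n ω).IsSparseUpTo s d}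
      ≤ bipartiteMeasure n p (⋃ S ∈ A,
          {ω | #S * d / 3 ≤ ((bipartiteGraph n ω).innerDegreeSum S : ℝ)}) := by
        refine measure_mono fun ω hω => ?_
        simp only [SimpleGraph.IsSparseUpTo, Set.mem_ofPred_eq, not_forall, not_lt] at hω
        obtain ⟨S, hne, hs, hdense⟩ := hω
        exact Set.mem_biUnion (by simp [A, hne, hs]) hdense
    _ ≤ ∑ S ∈ A, bipartiteMeasure n p
          {ω | #S * d / 3 ≤ ((bipartiteGraph n ω).innerDegreeSum S : ℝ)} :=
        measure_biUnion_finset_le _ _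
    _ ≤ ∑ S ∈ A, ENNReal.ofReal (exp (-(d / 60)) ^ #S) := by
        refine sum_le_sum fun S hS => bipartiteMeasure_innerDegreeSum_ge_le hp0 hp1 S ?_
        have hs : (#S : ℝ) ≤ s := (mem_filter.1 hS).2.2
        nlinarith
    _ = ENNReal.ofReal (∑ S ∈ A, exp (-(d / 60)) ^ #S) :=
        (ENNReal.ofReal_sum_of_nonneg fun _ _ => by positivity).symm
    _ ≤ ENNReal.ofReal (exp (2 * n * exp (-(d / 60))) - 1) := by
        refine ENNReal.ofReal_le_ofReal ?_
        have h := sum_pow_card_le_exp_sub_one (α := Fin n ⊕ Fin n) (exp_pos (-(d / 60))).le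
          (A := A) (by simp [A])
        simpa [two_mul] using h

end BipartiteMeasure

theorem tendsto_mul_exp_neg_mul_rpow_one_third {c : ℝ} (hc : 0 < c) :
    Tendsto (fun x : ℝ => x * exp (-(c * x ^ (1 / 3 : ℝ)))) atTop (𝓝 0) := by
  refine ((tendsto_rpow_mul_exp_neg_mul_atTop_nhds_zero 3 c hc).comp
    (tendsto_rpow_atTop (by norm_num : (0 : ℝ) < 1 / 3))).congr' ?_
  filter_upwards [eventually_ge_atTop 0] with x hx
  rw [Function.comp_apply, ← rpow_mul hx]
  norm_num

theorem tendsto_exp_two_mul_exp_sub_one {C ε' : ℝ} (hC : 0 < C) (hε : 0 < ε') :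
    Tendsto (fun n : ℕ =>
      exp (2 * n * exp (-(ε' * n * (C * (n : ℝ) ^ (-(2 : ℝ) / 3)) / 60))) - 1)
      atTop (𝓝 0) := by
  have h := ((tendsto_mul_exp_neg_mul_rpow_one_third (c := ε' * C / 60) (by positivity)).comp
    tendsto_natCast_atTop_atTop).const_mul 2
  have h' := ((continuous_exp.tendsto _).comp h).sub_const 1
  simp only [mul_zero, exp_zero, sub_self] at h'
  refine h'.congr fun n => ?_
  have hpow : (n : ℝ) ^ (1 / 3 : ℝ) = n * (n : ℝ) ^ (-(2 : ℝ) / 3) := by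
    rw [← rpow_one_add' n.cast_nonneg (by norm_num)]
    norm_num
  simp only [Function.comp_apply, hpow]
  ring_nf

/-- If `p(n) = C n^{-2/3}` with `C > 0` and `ε' ∈ (0,1)`, then a.a.s. every subgraph
`G'` of `G(n,n,p(n))` with minimum degree at least `ε' n p(n)` satisfies: for all
`X ⊆ V₀ ∪ V₁` with `|X| ≤ ε' n / 15`, one has `|N_{G'}(X) \ X| ≥ 2|X|`. -/
theorem expansion_of_min_degree_subgraphs
    (C : ℝ) (hC : 0 < C) (ε' : ℝ) (hε' : ε' ∈ Set.Ioo (0 : ℝ) 1) :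
    Filter.Tendsto (fun n : ℕ =>
      bipartiteMeasure n (C * (n : ℝ) ^ (-(2 : ℝ) / 3))
        {ω | ∀ G' : SimpleGraph (Fin n ⊕ Fin n), G' ≤ bipartiteGraph n ω →
          (∀ v : Fin n ⊕ Fin n,
            ε' * n * (C * (n : ℝ) ^ (-(2 : ℝ) / 3)) ≤ ((G'.neighborSet v).ncard : ℝ)) →
          ∀ X : Set (Fin n ⊕ Fin n), (X.ncard : ℝ) ≤ ε' * n / 15 →
            2 * X.ncard ≤ ((setNeighborSet G' X) \ X).ncard})
      Filter.atTop (nhds 1) := by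
  obtain ⟨hε, -⟩ := hε'
  have hp1 : ∀ᶠ n : ℕ in atTop, C * (n : ℝ) ^ (-(2 : ℝ) / 3) ≤ 1 := by
    have h := ((tendsto_rpow_neg_atTop (by norm_num : (0 : ℝ) < 2 / 3)).comp
      tendsto_natCast_atTop_atTop).const_mul C
    rw [mul_zero] at h
    filter_upwards [h.eventually_le_const zero_lt_one] with n hn
    simpa [neg_div] using hn
  have hfail : Tendsto (fun n : ℕ => bipartiteMeasure n (C * (n : ℝ) ^ (-(2 : ℝ) / 3))
      {ω | ¬(bipartiteGraph n ω).IsSparseUpTo (ε' * n / 5)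
        (ε' * n * (C * (n : ℝ) ^ (-(2 : ℝ) / 3)))}) atTop (𝓝 0) := by
    have hbound := ENNReal.tendsto_ofReal (tendsto_exp_two_mul_exp_sub_one hC hε)
    rw [ENNReal.ofReal_zero] at hbound
    refine tendsto_of_tendsto_of_tendsto_of_le_of_le' tendsto_const_nhds hbound
      (.of_forall fun _ => zero_le) ?_
    filter_upwards [hp1] with n hn
    exact bipartiteMeasure_not_isSparseUpTo_le (by positivity) hn (le_of_eq (by ring))
  have hgood := ENNReal.Tendsto.sub tendsto_const_nhds hfail (.inl ENNReal.one_ne_top)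
  rw [tsub_zero] at hgood
  refine tendsto_of_tendsto_of_tendsto_of_le_of_le hgood tendsto_const_nhds (fun n => ?_)
    fun _ => prob_le_one
  rw [← prob_compl_eq_one_sub .of_discrete]
  refine measure_mono fun ω hω G' hle hdeg X hX => ?_
  exact SimpleGraph.two_mul_ncard_le_ncard_setNeighborSet_diff (not_not.1 hω) hle hdeg
    (by linarith)
end

section
/- Let ε ∈ (0,1), n a positive integer, p ∈ (0,1], and let G' be a bipartite graph with parts V₀, V₁ of size n each, maximum degree at most (1+ε)·n·p, and more than (1+ε)·n²·p/2 edges. Let B₀ be the set of vertices in V₀ whose degree in G' is at least (1+ε/2)·n·p/2. Then |B₀| ≥ ε·n/(2+3ε). -/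
open Finset

/-!
Each vertex of `V₀` has degree at most `(1+ε)np`, and each vertex outside `B₀` degree less than
`(1+ε/2)np/2`. Since the degrees on `V₀` add up to the number of edges,
`(1+ε)n²p/2 < |B₀|·(1+ε)np + (n - |B₀|)·(1+ε/2)np/2`, which rearranges to
`np · εn < np · |B₀|(2+3ε)`.
-/

namespace SimpleGraph

variable {α β : Type*} [Fintype α] [Fintype β] {G : SimpleGraph (α ⊕ β)}

theorem isBipartiteWith_map_inl_map_inr (h : G ≤ completeBipartiteGraph α β) :
    G.IsBipartiteWith ↑(univ.map .inl : Finset (α ⊕ β)) ↑(univ.map .inr : Finset (α ⊕ β)) where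
  disjoint := by
    rw [disjoint_coe]
    exact disjoint_map_inl_map_inr _ _
  mem_of_adj v w hvw := by
    have := h hvw
    rcases v with a | b <;> rcases w with a' | b' <;> simp_all

theorem sum_degree_inl_eq_card_edgeFinset [DecidableRel G.Adj]
    (h : G ≤ completeBipartiteGraph α β) :
    ∑ a, G.degree (.inl a) = #G.edgeFinset := by
  rw [← isBipartiteWith_sum_degrees_eq_card_edges (isBipartiteWith_map_inl_map_inr h), sum_map]
  rfl

end SimpleGraph

theorem Finset.sum_le_card_filter_mul_add {ι R : Type*} [Ring R] [LinearOrder R] [IsOrderedRing R]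
    (s : Finset ι) (f : ι → R) {M t : R} (hM : ∀ i ∈ s, f i ≤ M) :
    ∑ i ∈ s, f i ≤ #{i ∈ s | t ≤ f i} * M + (#s - #{i ∈ s | t ≤ f i}) * t := by
  have hlarge : ∑ i ∈ s with t ≤ f i, f i ≤ #{i ∈ s | t ≤ f i} * M :=
    (sum_le_card_nsmul _ _ M fun i hi ↦ hM i (mem_filter.mp hi).1).trans_eq (nsmul_eq_mul _ _)
  have hsmall : ∑ i ∈ s with ¬t ≤ f i, f i ≤ #{i ∈ s | ¬t ≤ f i} * t :=
    (sum_le_card_nsmul _ _ t fun i hi ↦ (not_le.mp (mem_filter.mp hi).2).le).trans_eq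
      (nsmul_eq_mul _ _)
  have hcard : (#{i ∈ s | ¬t ≤ f i} : R) = #s - #{i ∈ s | t ≤ f i} := by
    rw [eq_sub_iff_add_eq', ← Nat.cast_add, card_filter_add_card_filter_not (t ≤ f ·)]
  rw [← sum_filter_add_sum_filter_not s (t ≤ f ·), ← hcard]
  exact add_le_add hlarge hsmall

theorem large_degree_part_size_general
    (ε : ℝ) (hε : ε ∈ Set.Ioo (0 : ℝ) 1) (n : ℕ)
    (p : ℝ) (hp0 : 0 < p)
    (G' : SimpleGraph (Fin n ⊕ Fin n)) [DecidableRel G'.Adj]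
    (hbip : G' ≤ completeBipartiteGraph (Fin n) (Fin n))
    (hmax : ∀ v : Fin n ⊕ Fin n, (G'.degree v : ℝ) ≤ (1 + ε) * n * p)
    (he : (1 + ε) * n ^ 2 * p / 2 < (G'.edgeFinset.card : ℝ)) :
    ε * n / (2 + 3 * ε) ≤
      ((univ.filter (fun v : Fin n =>
        (1 + ε / 2) * n * p / 2 ≤ (G'.degree (Sum.inl v) : ℝ))).card : ℝ) := by
  set b : ℝ := ((#{v | (1 + ε / 2) * n * p / 2 ≤ (G'.degree (Sum.inl v) : ℝ)} : ℕ) : ℝ)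
  have hedges : (#G'.edgeFinset : ℝ) ≤
      b * ((1 + ε) * n * p) + (n - b) * ((1 + ε / 2) * n * p / 2) := by
    rw [← SimpleGraph.sum_degree_inl_eq_card_edgeFinset hbip, Nat.cast_sum]
    simpa using sum_le_card_filter_mul_add univ _ fun v _ ↦ hmax (.inl v)
  have hscaled : n * p * (ε * n) < n * p * (b * (2 + 3 * ε)) := by linarith
  rw [div_le_iff₀ (by linarith [hε.1])]
  exact (lt_of_mul_lt_mul_left hscaled (by positivity)).le

/-- If a bipartite graph `G'` with parts of size `n`, maximum degree at most `(1+ε)np`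
and more than `(1+ε)n²p/2` edges is given, then the set `B₀` of vertices of `V₀` with
degree at least `(1+ε/2)np/2` satisfies `|B₀| ≥ ε n / (2+3ε)`. -/
theorem large_degree_part_size
    (ε : ℝ) (hε : ε ∈ Set.Ioo (0 : ℝ) 1) (n : ℕ) (hn : 0 < n)
    (p : ℝ) (hp0 : 0 < p) (hp1 : p ≤ 1)
    (G' : SimpleGraph (Fin n ⊕ Fin n)) [DecidableRel G'.Adj]
    (hbip : G' ≤ completeBipartiteGraph (Fin n) (Fin n))
    (hmax : ∀ v : Fin n ⊕ Fin n, (G'.degree v : ℝ) ≤ (1 + ε) * n * p)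
    (he : (1 + ε) * n ^ 2 * p / 2 < (G'.edgeFinset.card : ℝ)) :
    ε * n / (2 + 3 * ε) ≤
      ((univ.filter (fun v : Fin n =>
        (1 + ε / 2) * n * p / 2 ≤ (G'.degree (Sum.inl v) : ℝ))).card : ℝ) :=
  large_degree_part_size_general ε hε n p hp0 G' hbip hmax he
end
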